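/- For any f in H¹ of the one-dimensional torus, ‖f‖_∞² ≤ ‖f‖_2² + 2 ‖f‖_2 ‖f'‖_2 (Gagliardo–Nirenberg inequality on the torus). -/

import Mathlib

open Real MeasureTheory intervalIntegral Set

/-!
Choose `c` with `f c ^ 2` equal to the mean of `f ^ 2` (mean value theorem for integrals). Then
`f x ^ 2 - f c ^ 2 = ∫ c..x, 2 f f'` is at most `2 ∫ |f| |f'|`, which Cauchy–Schwarz bounds by
`2 ‖f‖₂ ‖f'‖₂`. Periodicity reduces an arbitrary `x` to one in `[0, 1]`.
-/

theorem integral_abs_mul_abs_le_sqrt_mul_sqrt {α : Type*} [MeasurableSpace α] {μ : Measure α}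
    {f g : α → ℝ} (hf : MemLp f 2 μ) (hg : MemLp g 2 μ) :
    ∫ x, |f x| * |g x| ∂μ ≤ √(∫ x, f x ^ 2 ∂μ) * √(∫ x, g x ^ 2 ∂μ) := by
  have hpq : (2 : ℝ).HolderConjugate 2 := .two_two
  have h := integral_mul_norm_le_Lp_mul_Lq hpq (by simpa using hf) (by simpa using hg)
  simpa only [norm_eq_abs, rpow_two, sq_abs, sqrt_eq_rpow, one_div] using h

theorem ContinuousOn.memLp_two_restrict_Ioc {f : ℝ → ℝ} {a b : ℝ} (hf : ContinuousOn f (Icc a b)) :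
    MemLp f 2 (volume.restrict (Ioc a b)) :=
  (memLp_two_iff_integrable_sq
    ((hf.mono Ioc_subset_Icc_self).aestronglyMeasurable measurableSet_Ioc)).2
    ((hf.pow 2).integrableOn_Icc.mono_set Ioc_subset_Icc_self)

theorem intervalIntegral.integral_abs_mul_abs_le_sqrt_mul_sqrt {f g : ℝ → ℝ} {a b : ℝ}
    (hab : a ≤ b) (hf : ContinuousOn f (Icc a b)) (hg : ContinuousOn g (Icc a b)) :
    ∫ x in a..b, |f x| * |g x| ≤ √(∫ x in a..b, f x ^ 2) * √(∫ x in a..b, g x ^ 2) := by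
  simp only [integral_of_le hab]
  exact _root_.integral_abs_mul_abs_le_sqrt_mul_sqrt hf.memLp_two_restrict_Ioc
    hg.memLp_two_restrict_Ioc

theorem abs_sub_le_integral_abs_deriv {h h' : ℝ → ℝ} {a b y z : ℝ}
    (hderiv : ∀ x ∈ Icc a b, HasDerivAt h (h' x) x) (hint : IntervalIntegrable h' volume a b)
    (hy : y ∈ Icc a b) (hz : z ∈ Icc a b) :
    |h z - h y| ≤ ∫ x in a..b, |h' x| := by
  wlog hyz : y ≤ z generalizing y z
  · rw [abs_sub_comm]
    exact this hz hy (le_of_not_ge hyz)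
  have hsub : uIcc y z ⊆ uIcc a b := uIcc_subset_uIcc (mem_uIcc_of_le hy.1 hy.2)
    (mem_uIcc_of_le hz.1 hz.2)
  have hab : a ≤ b := hy.1.trans hy.2
  have hderiv' : ∀ x ∈ uIcc y z, HasDerivAt h (h' x) x := fun x hx =>
    hderiv x (by simpa [uIcc_of_le hab] using hsub hx)
  calc |h z - h y| = |∫ x in y..z, h' x| := by
        rw [integral_eq_sub_of_hasDerivAt hderiv' (hint.mono_set hsub)]
    _ ≤ ∫ x in y..z, |h' x| := abs_integral_le_integral_abs hyz
    _ ≤ ∫ x in a..b, |h' x| :=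
        integral_mono_interval hy.1 hyz hz.2 (.of_forall fun _ => abs_nonneg _) hint.abs

theorem exists_sub_mul_sq_eq_integral_sq {f : ℝ → ℝ} {a b : ℝ} (hab : a < b)
    (hf : ContinuousOn f (Icc a b)) :
    ∃ c ∈ Icc a b, (b - a) * f c ^ 2 = ∫ x in a..b, f x ^ 2 := by
  have hf2 : ContinuousOn (fun x => f x ^ 2) (uIcc a b) := uIcc_of_le hab.le ▸ hf.pow 2
  obtain ⟨c, hc, hfc⟩ := exists_eq_interval_average hab.ne hf2
  refine ⟨c, ?_, ?_⟩
  · rw [uIoo_of_le hab.le] at hc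
    exact Ioo_subset_Icc_self hc
  · rw [hfc, interval_average_eq_div]
    field_simp [sub_ne_zero.2 hab.ne']

theorem sub_mul_sq_le_integral_sq_add {f f' : ℝ → ℝ} {a b x : ℝ} (hab : a < b)
    (hderiv : ∀ y ∈ Icc a b, HasDerivAt f (f' y) y) (hf' : ContinuousOn f' (Icc a b))
    (hx : x ∈ Icc a b) :
    (b - a) * f x ^ 2 ≤ (∫ y in a..b, f y ^ 2) +
      2 * (b - a) * √(∫ y in a..b, f y ^ 2) * √(∫ y in a..b, f' y ^ 2) := by
  have hf : ContinuousOn f (Icc a b) := fun y hy => (hderiv y hy).continuousAt.continuousWithinAt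
  obtain ⟨c, hc, hfc⟩ := exists_sub_mul_sq_eq_integral_sq hab hf
  have hsq : ∀ y ∈ Icc a b, HasDerivAt (fun y => f y ^ 2) (2 * f y * f' y) y := fun y hy => by
    simpa [mul_comm, mul_left_comm] using (hderiv y hy).fun_pow 2
  have hint : IntervalIntegrable (fun y => 2 * f y * f' y) volume a b :=
    ((continuousOn_const.mul hf).mul hf').intervalIntegrable_of_Icc hab.le
  have hvar : f x ^ 2 - f c ^ 2 ≤ 2 * √(∫ y in a..b, f y ^ 2) * √(∫ y in a..b, f' y ^ 2) :=
    calc f x ^ 2 - f c ^ 2 ≤ |f x ^ 2 - f c ^ 2| := le_abs_self _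
      _ ≤ ∫ y in a..b, |2 * f y * f' y| := abs_sub_le_integral_abs_deriv hsq hint hc hx
      _ = 2 * ∫ y in a..b, |f y| * |f' y| := by
        rw [← intervalIntegral.integral_const_mul]
        simp only [abs_mul, abs_two, mul_assoc]
      _ ≤ 2 * (√(∫ y in a..b, f y ^ 2) * √(∫ y in a..b, f' y ^ 2)) := by
        gcongr
        exact integral_abs_mul_abs_le_sqrt_mul_sqrt hab.le hf hf'
      _ = _ := by ring
  have := mul_le_mul_of_nonneg_left hvar (sub_nonneg.2 hab.le)
  linarith

/-- Gagliardo–Nirenberg inequality on the one-dimensional torus (1-periodic functions):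
`‖f‖_∞² ≤ ‖f‖_2² + 2 ‖f‖_2 ‖f'‖_2`, stated pointwise: `(f x)² ≤ ∫ f² + 2 √(∫ f²) √(∫ f'²)`. -/
theorem stmt_3 (f f' : ℝ → ℝ)
    (hper : Function.Periodic f 1)
    (hderiv : ∀ x, HasDerivAt f (f' x) x)
    (hf'cont : Continuous f') :
    ∀ x : ℝ, (f x) ^ 2 ≤
      (∫ y in (0:ℝ)..1, (f y) ^ 2) +
        2 * Real.sqrt (∫ y in (0:ℝ)..1, (f y) ^ 2) *
          Real.sqrt (∫ y in (0:ℝ)..1, (f' y) ^ 2) := by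
  intro x
  obtain ⟨y, hy, hxy⟩ := hper.exists_mem_Ico₀ one_pos x
  rw [hxy]
  simpa using sub_mul_sq_le_integral_sq_add one_pos (fun y _ => hderiv y)
    hf'cont.continuousOn (Ico_subset_Icc_self hy)
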